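/- arXiv:2307.00401 — 5 statements merged into one kernel-verified Lean document; each statement's English description precedes it below -/
import Mathlib

section
/- Let X be a Helly graph such that every strictly increasing chain of round cliques of X has length at most N (i.e. X has finite combinatorial dimension). Then every graph automorphism g of X is either elliptic or hyperbolic: either the orbit {g^n · x : n ∈ ℤ} is bounded for every vertex x of X, or for every vertex x the map n ∈ ℤ ↦ g^n · x ∈ X is a quasi-isometric embedding. -/
/-!
If `2 (N + 2) d(x, gᵏ x) < k` for some `x` and `k ≥ 1`, then with `c = 1 / (2 (N + 2))` the
function `f y = supᵢ (d(y, gⁱ x) - c |i|)` is admissible and moved by at most `c` by `g`.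
Lang's iteration `f ↦ (f + f*) / 2` converges to a point `p` of the injective hull, still moved
by at most `c`. The round cliques `φ(p ∘ g⁻ⁱ) = gⁱ φ(p)`, `0 ≤ i ≤ N + 1`, pairwise meet in the
Helly sense because the drift `(i + j) c < 1` is absorbed by the integer ceilings, so they have
a common point. The dimension bound makes the decreasing chain of their partial intersections
stabilize, giving a round clique `A ⊆ g A`, and then the increasing chain `gⁱ A` stabilize, so
`g A = A` and every orbit is bounded. Otherwise `k ≤ 2 (N + 2) d(x, gᵏ x)` for all `x` and `k`,
and the orbit maps are quasi-isometric embeddings.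
-/

namespace HellyPaper

variable {V : Type*}

/-- The combinatorial ball of radius `r` around `x` in the graph `G`. -/
def ball (G : SimpleGraph V) (x : V) (r : ℕ) : Set V := {y | G.dist x y ≤ r}

/-- A Helly graph: a connected graph in which every family of pairwise
intersecting combinatorial balls has nonempty global intersection. -/
def IsHellyGraph (G : SimpleGraph V) : Prop :=
  G.Connected ∧ ∀ S : Set (V × ℕ),
    (∀ p ∈ S, ∀ q ∈ S, (ball G p.1 p.2 ∩ ball G q.1 q.2).Nonempty) →
    (⋂ p ∈ S, ball G p.1 p.2).Nonempty

/-- A round clique: a nonempty clique which is an intersection of a family of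
combinatorial balls. -/
def IsRoundClique (G : SimpleGraph V) (σ : Set V) : Prop :=
  σ.Nonempty ∧ G.IsClique σ ∧ ∃ S : Set (V × ℕ), σ = ⋂ p ∈ S, ball G p.1 p.2

/-- Every strictly increasing chain of round cliques σ₀ ⊊ σ₁ ⊊ ⋯ ⊊ σ_k has k ≤ N
(combinatorial dimension at most N, following Corollary C of the paper). -/
def DimAtMost (G : SimpleGraph V) (N : ℕ) : Prop :=
  ∀ (k : ℕ) (c : Fin (k + 1) → Set V),
    (∀ i, IsRoundClique G (c i)) → StrictMono c → k ≤ N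

/-- The injective hull of `G`, realized as the set of extremal functions. -/
def InjHull (G : SimpleGraph V) : Set (V → ℝ) :=
  {f | (∀ x y : V, (G.dist x y : ℝ) ≤ f x + f y) ∧
    ∀ x : V, IsLUB (Set.range fun y => (G.dist x y : ℝ) - f y) (f x)}

/-- The sup metric d∞ on the injective hull. -/
noncomputable def supDist (f g : V → ℝ) : ℝ := ⨆ x, |f x - g x|

/-- The isometric action of a graph automorphism on the injective hull:
(g·f)(x) = f(g⁻¹·x). -/
def hullAct (g : Equiv.Perm V) (f : V → ℝ) : V → ℝ := fun x => f (g⁻¹ x)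

/-- A permutation of the vertices is a graph automorphism if it preserves adjacency. -/
def IsGraphAut (G : SimpleGraph V) (g : Equiv.Perm V) : Prop :=
  ∀ x y, G.Adj (g x) (g y) ↔ G.Adj x y

/-- The round clique associated to a point of the injective hull:
φ(p) = ⋂_{x ∈ X} B(x, ⌈p(x)⌉). -/
def phi (G : SimpleGraph V) (p : V → ℝ) : Set V :=
  {z | ∀ x : V, (G.dist x z : ℝ) ≤ (⌈p x⌉ : ℝ)}

/-- The values of `p` all lie in (1/2)ℕ. -/
def halfInt (p : V → ℝ) : Prop := ∀ x, ∃ k : ℕ, p x = (k : ℝ) / 2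

end HellyPaper

namespace HellyPaper

open Set Filter Topology Pointwise

lemma _root_.Subadditive.exists_le_div_mul_add {u : ℕ → ℝ} (h : Subadditive u)
    (hu : ∀ n, 0 ≤ u n) {k : ℕ} (hk : k ≠ 0) : ∃ B, ∀ n, u n ≤ u k / k * n + B := by
  refine ⟨∑ r ∈ Finset.range k, u r, fun n => ?_⟩
  have hquot : ((n / k : ℕ) : ℝ) * u k ≤ u k / k * n :=
    (mul_le_mul_of_nonneg_right Nat.cast_div_le (hu k)).trans_eq (by ring)
  have hrem : u (n % k) ≤ ∑ r ∈ Finset.range k, u r :=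
    Finset.single_le_sum (fun r _ => hu r)
      (Finset.mem_range.2 (Nat.mod_lt n (Nat.pos_of_ne_zero hk)))
  calc u n = u (n / k * k + n % k) := by rw [Nat.div_add_mod']
    _ ≤ (n / k : ℕ) * u k + u (n % k) := h.apply_mul_add_le _ _ _
    _ ≤ _ := add_le_add hquot hrem

section Automorphisms

variable {V : Type*} {G : SimpleGraph V} {g : Equiv.Perm V}

def autGroup (G : SimpleGraph V) : Subgroup (Equiv.Perm V) where
  carrier := {g | IsGraphAut G g}
  one_mem' _ _ := Iff.rfl
  mul_mem' {a b} ha hb x y := (ha (b x) (b y)).trans (hb x y)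
  inv_mem' {a} ha x y := by simpa using (ha (a⁻¹ x) (a⁻¹ y)).symm

lemma IsGraphAut.inv (hg : IsGraphAut G g) : IsGraphAut G g⁻¹ :=
  (autGroup G).inv_mem hg

lemma IsGraphAut.pow (hg : IsGraphAut G g) (n : ℕ) : IsGraphAut G (g ^ n) :=
  (autGroup G).pow_mem hg n

lemma IsGraphAut.zpow (hg : IsGraphAut G g) (n : ℤ) : IsGraphAut G (g ^ n) :=
  (autGroup G).zpow_mem hg n

lemma IsGraphAut.dist_le (hg : IsGraphAut G g) (hc : G.Connected) (a b : V) :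
    G.dist (g a) (g b) ≤ G.dist a b := by
  obtain ⟨w, hw⟩ := (hc a b).exists_walk_length_eq_dist
  simpa [hw] using SimpleGraph.dist_le (w.map ⟨g, (hg _ _).mpr⟩)

lemma IsGraphAut.dist_eq (hg : IsGraphAut G g) (hc : G.Connected) (a b : V) :
    G.dist (g a) (g b) = G.dist a b :=
  le_antisymm (hg.dist_le hc a b) (by simpa using hg.inv.dist_le hc (g a) (g b))

lemma IsGraphAut.dist_zpow_apply_zpow_apply (hg : IsGraphAut G g) (hc : G.Connected) (x : V)
    (m n : ℤ) : G.dist ((g ^ m) x) ((g ^ n) x) = G.dist x ((g ^ (n - m)) x) := by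
  rw [← (hg.zpow m).dist_eq hc x, ← Equiv.Perm.mul_apply, ← zpow_add, add_sub_cancel]

lemma IsGraphAut.dist_zpow_apply_eq_natAbs (hg : IsGraphAut G g) (hc : G.Connected) (x : V)
    (k : ℤ) : G.dist x ((g ^ k) x) = G.dist x ((g ^ k.natAbs) x) := by
  obtain ⟨n, rfl | rfl⟩ := Int.eq_nat_or_neg k
  · simp
  · have := hg.dist_zpow_apply_zpow_apply hc x n 0
    rw [zpow_zero, Equiv.Perm.one_apply, zero_sub, zpow_natCast, SimpleGraph.dist_comm] at this
    simpa using this.symm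

lemma IsGraphAut.subadditive_dist_pow_apply (hg : IsGraphAut G g) (hc : G.Connected) (x : V) :
    Subadditive fun n : ℕ => (G.dist x ((g ^ n) x) : ℝ) := by
  intro m n
  have hshift : G.dist ((g ^ m) x) ((g ^ (m + n)) x) = G.dist x ((g ^ n) x) := by
    rw [pow_add, Equiv.Perm.mul_apply, (hg.pow m).dist_eq hc]
  have := hc.dist_triangle (u := x) (v := (g ^ m) x) (w := (g ^ (m + n)) x)
  rw [hshift] at this
  dsimp only
  exact_mod_cast this

lemma IsGraphAut.dist_pow_apply_le (hg : IsGraphAut G g) (hc : G.Connected) (x : V) (n : ℕ) :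
    G.dist x ((g ^ n) x) ≤ n * G.dist x (g x) := by
  have := (hg.subadditive_dist_pow_apply hc x).apply_mul_add_le n 1 0
  simp only [mul_one, add_zero, pow_one, pow_zero, Equiv.Perm.one_apply,
    SimpleGraph.dist_self, Nat.cast_zero] at this
  exact_mod_cast this

lemma IsGraphAut.exists_dist_zpow_apply_le (hg : IsGraphAut G g) (hc : G.Connected) (x : V)
    {k : ℕ} (hk : k ≠ 0) {c : ℝ}
    (hkc : (G.dist x ((g ^ k) x) : ℝ) ≤ c * k) :
    ∃ B, ∀ i : ℤ, (G.dist x ((g ^ i) x) : ℝ) ≤ c * |(i : ℝ)| + B := by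
  obtain ⟨B, hB⟩ := (hg.subadditive_dist_pow_apply hc x).exists_le_div_mul_add
    (fun _ => by positivity) hk
  have hslope : (G.dist x ((g ^ k) x) : ℝ) / k ≤ c := by
    rwa [div_le_iff₀ (by positivity)]
  refine ⟨B, fun i => ?_⟩
  rw [hg.dist_zpow_apply_eq_natAbs hc, ← Int.cast_abs, ← Nat.cast_natAbs]
  exact (hB _).trans (by gcongr)

end Automorphisms

section Balls

variable {V : Type*} {G : SimpleGraph V}

lemma mem_ball {x y : V} {r : ℕ} : y ∈ ball G x r ↔ G.dist x y ≤ r := Iff.rfl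

lemma mem_iInter_ball {S : Set (V × ℕ)} {z : V} :
    z ∈ ⋂ p ∈ S, ball G p.1 p.2 ↔ ∀ p ∈ S, G.dist p.1 z ≤ p.2 := by
  simp only [mem_iInter, mem_ball]

lemma exists_dist_le_and_dist_le (hc : G.Connected) {x y : V} {r s : ℕ}
    (h : G.dist x y ≤ r + s) : ∃ u, G.dist x u ≤ r ∧ G.dist u y ≤ s := by
  obtain ⟨w, hw⟩ := (hc x y).exists_walk_length_eq_dist
  refine ⟨w.getVert r, ?_, ?_⟩
  · exact (SimpleGraph.dist_le (w.take r)).trans (by simp)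
  · have := SimpleGraph.dist_le (w.drop r)
    simp only [SimpleGraph.Walk.drop_length, hw] at this
    omega

lemma IsHellyGraph.iInter_ball_nonempty (hH : IsHellyGraph G) {S : Set (V × ℕ)}
    (hS : ∀ p ∈ S, ∀ q ∈ S, G.dist p.1 q.1 ≤ p.2 + q.2) :
    (⋂ p ∈ S, ball G p.1 p.2).Nonempty := by
  refine hH.2 S fun p hp q hq => ?_
  obtain ⟨u, hpu, huq⟩ := exists_dist_le_and_dist_le hH.1 (hS p hp q hq)
  exact ⟨u, hpu, by rwa [mem_ball, SimpleGraph.dist_comm]⟩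

def IsBallInter (G : SimpleGraph V) (s : Set V) : Prop :=
  ∃ S : Set (V × ℕ), s = ⋂ p ∈ S, ball G p.1 p.2

lemma IsBallInter.iInter {ι : Sort*} {s : ι → Set V} (hs : ∀ i, IsBallInter G (s i)) :
    IsBallInter G (⋂ i, s i) := by
  choose S hS using hs
  exact ⟨⋃ i, S i, by rw [biInter_iUnion]; exact iInter_congr hS⟩

lemma IsBallInter.smul {g : Equiv.Perm V} (hg : IsGraphAut G g) (hc : G.Connected)
    {s : Set V} (hs : IsBallInter G s) : IsBallInter G (g • s) := by
  obtain ⟨S, rfl⟩ := hs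
  refine ⟨(fun p => (g p.1, p.2)) '' S, Set.ext fun z => ?_⟩
  simp only [mem_smul_set_iff_inv_smul_mem, Equiv.Perm.smul_def, biInter_image, mem_iInter,
    mem_ball]
  refine forall₂_congr fun p _ => ?_
  rw [← hg.dist_eq hc]; simp

lemma IsRoundClique.smul {g : Equiv.Perm V} (hg : IsGraphAut G g) (hc : G.Connected)
    {σ : Set V} (hσ : IsRoundClique G σ) : IsRoundClique G (g • σ) := by
  obtain ⟨hne, hclique, hball⟩ := hσ
  refine ⟨hne.smul_set, ?_, IsBallInter.smul hg hc hball⟩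
  rintro _ ⟨a, ha, rfl⟩ _ ⟨b, hb, rfl⟩ hab
  exact (hg a b).mpr (hclique ha hb fun h => hab (h ▸ rfl))

lemma _root_.SimpleGraph.IsClique.dist_le_one {s : Set V} (hs : G.IsClique s) {a b : V}
    (ha : a ∈ s) (hb : b ∈ s) : G.dist a b ≤ 1 := by
  by_cases hab : a = b
  · simp [hab]
  · exact (SimpleGraph.dist_eq_one_iff_adj.mpr (hs ha hb hab)).le

lemma DimAtMost.exists_succ_eq {N : ℕ} (hdim : DimAtMost G N) {c : ℕ → Set V}
    (hmono : Monotone c) (hround : ∀ i ≤ N + 1, IsRoundClique G (c i)) :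
    ∃ i ≤ N, c (i + 1) = c i := by
  by_contra! hne
  have hchain : StrictMono fun i : Fin (N + 2) => c i :=
    Fin.strictMono_iff_lt_succ.mpr fun i =>
      (hmono (Nat.le_succ i)).ssubset_of_ne (hne i (Nat.lt_succ_iff.mp i.2)).symm
  have := hdim (N + 1) _ (fun i => hround i (Nat.lt_succ_iff.mp i.2)) hchain
  omega

end Balls

section Extremal

variable {V : Type*} {G : SimpleGraph V} {f f' : V → ℝ} {c : ℝ}

def IsAdmissible (G : SimpleGraph V) (f : V → ℝ) : Prop :=
  ∀ x y, (G.dist x y : ℝ) ≤ f x + f y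

noncomputable def dual (G : SimpleGraph V) (f : V → ℝ) (x : V) : ℝ :=
  ⨆ y, ((G.dist x y : ℝ) - f y)

noncomputable def langStep (G : SimpleGraph V) (f : V → ℝ) (x : V) : ℝ :=
  (f x + dual G f x) / 2

noncomputable def langLimit (G : SimpleGraph V) (f : V → ℝ) (x : V) : ℝ :=
  ⨅ k, (langStep G)^[k] f x

lemma IsAdmissible.nonneg (hf : IsAdmissible G f) (x : V) : 0 ≤ f x := by
  linarith [hf x x, show ((G.dist x x : ℕ) : ℝ) = 0 by simp]

lemma IsAdmissible.bddAbove (hf : IsAdmissible G f) (x : V) :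
    BddAbove (range fun y => (G.dist x y : ℝ) - f y) :=
  ⟨f x, by rintro _ ⟨y, rfl⟩; linarith [hf x y]⟩

lemma IsAdmissible.le_dual (hf : IsAdmissible G f) (x y : V) :
    (G.dist x y : ℝ) - f y ≤ dual G f x :=
  le_ciSup (hf.bddAbove x) y

lemma isAdmissible_langStep (hf : IsAdmissible G f) : IsAdmissible G (langStep G f) := by
  intro x y
  have hx := hf.le_dual x y
  have hy := hf.le_dual y x
  rw [SimpleGraph.dist_comm] at hy
  simp only [langStep]
  linarith

lemma isAdmissible_iterate_langStep (hf : IsAdmissible G f) (k : ℕ) :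
    IsAdmissible G ((langStep G)^[k] f) := by
  induction k with
  | zero => exact hf
  | succ k ih => rw [Function.iterate_succ_apply']; exact isAdmissible_langStep ih

lemma IsAdmissible.comp {m : Equiv.Perm V} (hm : ∀ a b, G.dist (m a) (m b) = G.dist a b)
    (hf : IsAdmissible G f) : IsAdmissible G (f ∘ m) := fun a b => by
  simpa only [Function.comp_apply, hm] using hf (m a) (m b)

lemma dual_comp {m : Equiv.Perm V} (hm : ∀ a b, G.dist (m a) (m b) = G.dist a b) (x : V) :
    dual G (f ∘ m) x = dual G f (m x) := by
  simp only [dual, Function.comp_apply, ← hm x]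
  exact m.iSup_comp (g := fun z => (G.dist (m x) z : ℝ) - f z)

lemma langStep_comp {m : Equiv.Perm V} (hm : ∀ a b, G.dist (m a) (m b) = G.dist a b) :
    langStep G (f ∘ m) = langStep G f ∘ m := by
  ext x
  simp only [langStep, Function.comp_apply, dual_comp hm]

lemma IsAdmissible.bddBelow_iterate_langStep (hf : IsAdmissible G f) (x : V) :
    BddBelow (range fun k => (langStep G)^[k] f x) :=
  ⟨0, by rintro _ ⟨k, rfl⟩; exact (isAdmissible_iterate_langStep hf k).nonneg x⟩

lemma IsAdmissible.langLimit_le_iterate (hf : IsAdmissible G f) (k : ℕ) (x : V) :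
    langLimit G f x ≤ (langStep G)^[k] f x :=
  ciInf_le (hf.bddBelow_iterate_langStep x) k

variable [Nonempty V]

lemma dual_le {x : V} {b : ℝ} (h : ∀ y, (G.dist x y : ℝ) - f y ≤ b) : dual G f x ≤ b :=
  ciSup_le h

lemma IsAdmissible.dual_le_self (hf : IsAdmissible G f) (x : V) : dual G f x ≤ f x :=
  dual_le fun y => by linarith [hf x y]

lemma IsAdmissible.dual_le_dual_add (hf' : IsAdmissible G f') (h : ∀ y, f' y ≤ f y + c)
    (x : V) : dual G f x ≤ dual G f' x + c :=
  dual_le fun y => by linarith [h y, hf'.le_dual x y]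

lemma mem_injHull_of_le_dual (hf : IsAdmissible G f) (h : ∀ x, f x ≤ dual G f x) :
    f ∈ InjHull G :=
  ⟨hf, fun x => ⟨by rintro _ ⟨y, rfl⟩; linarith [hf x y],
    fun b hb => (h x).trans (dual_le fun y => hb ⟨y, rfl⟩)⟩⟩

lemma IsAdmissible.langStep_le (hf : IsAdmissible G f) (x : V) : langStep G f x ≤ f x := by
  simp only [langStep]
  linarith [hf.dual_le_self x]

lemma abs_langStep_sub_le (hf : IsAdmissible G f) (hf' : IsAdmissible G f')
    (h : ∀ y, |f y - f' y| ≤ c) (x : V) : |langStep G f x - langStep G f' x| ≤ c := by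
  have h₁ := hf'.dual_le_dual_add (f := f) (fun y => by linarith [abs_le.mp (h y)]) x
  have h₂ := hf.dual_le_dual_add (f := f') (fun y => by linarith [abs_le.mp (h y)]) x
  have := abs_le.mp (h x)
  simp only [langStep]
  rw [abs_le]
  constructor <;> linarith

lemma abs_iterate_langStep_comp_sub_le {m : Equiv.Perm V}
    (hm : ∀ a b, G.dist (m a) (m b) = G.dist a b) (hf : IsAdmissible G f)
    (hdrift : ∀ y, |f (m y) - f y| ≤ c) (k : ℕ) (y : V) :
    |(langStep G)^[k] f (m y) - (langStep G)^[k] f y| ≤ c := by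
  induction k generalizing y with
  | zero => exact hdrift y
  | succ k ih =>
    have hF := isAdmissible_iterate_langStep hf k
    rw [Function.iterate_succ_apply', ← Function.comp_apply (f := langStep G _),
      ← langStep_comp hm]
    exact abs_langStep_sub_le (hF.comp hm) hF ih y

lemma IsAdmissible.tendsto_iterate_langStep (hf : IsAdmissible G f) (x : V) :
    Tendsto (fun k => (langStep G)^[k] f x) atTop (𝓝 (langLimit G f x)) :=
  tendsto_atTop_ciInf
    (antitone_nat_of_succ_le fun k => by
      rw [Function.iterate_succ_apply']
      exact (isAdmissible_iterate_langStep hf k).langStep_le x)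
    (hf.bddBelow_iterate_langStep x)

lemma isAdmissible_langLimit (hf : IsAdmissible G f) : IsAdmissible G (langLimit G f) :=
  fun x y =>
    ge_of_tendsto' ((hf.tendsto_iterate_langStep x).add (hf.tendsto_iterate_langStep y))
      fun k => isAdmissible_iterate_langStep hf k x y

lemma langLimit_mem_injHull (hf : IsAdmissible G f) : langLimit G f ∈ InjHull G := by
  have hp := isAdmissible_langLimit hf
  refine mem_injHull_of_le_dual hp fun x => ?_
  -- `p ≤ fₖ` gives `fₖ* ≤ p*`; pass to the limit in `fₖ₊₁ = (fₖ + fₖ*) / 2`.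
  have hstep : ∀ k, (langStep G)^[k + 1] f x ≤
      ((langStep G)^[k] f x + dual G (langLimit G f) x) / 2 := fun k => by
    rw [Function.iterate_succ_apply', langStep]
    linarith [hp.dual_le_dual_add (c := 0)
      (fun y => by simpa using hf.langLimit_le_iterate k y) x]
  have := le_of_tendsto_of_tendsto'
    ((tendsto_add_atTop_iff_nat 1).mpr (hf.tendsto_iterate_langStep x))
    (((hf.tendsto_iterate_langStep x).add_const _).div_const 2) hstep
  linarith

lemma IsAdmissible.abs_langLimit_comp_sub_le {m : Equiv.Perm V}
    (hm : ∀ a b, G.dist (m a) (m b) = G.dist a b) (hf : IsAdmissible G f)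
    (hdrift : ∀ y, |f (m y) - f y| ≤ c) (y : V) :
    |langLimit G f (m y) - langLimit G f y| ≤ c :=
  le_of_tendsto' (((hf.tendsto_iterate_langStep (m y)).sub (hf.tendsto_iterate_langStep y)).abs)
    fun k => abs_iterate_langStep_comp_sub_le hm hf hdrift k y

end Extremal

section PenalizedDist

variable {V : Type*} {G : SimpleGraph V} {u : ℤ → V} {c B : ℝ}

noncomputable def penalizedDist (G : SimpleGraph V) (u : ℤ → V) (c : ℝ) (y : V) : ℝ :=
  ⨆ i, ((G.dist y (u i) : ℝ) - c * |(i : ℝ)|)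

lemma bddAbove_penalizedDist (hc : G.Connected)
    (hB : ∀ i, (G.dist (u 0) (u i) : ℝ) ≤ c * |(i : ℝ)| + B) (y : V) :
    BddAbove (range fun i => (G.dist y (u i) : ℝ) - c * |(i : ℝ)|) := by
  refine ⟨G.dist y (u 0) + B, ?_⟩
  rintro _ ⟨i, rfl⟩
  have : (G.dist y (u i) : ℝ) ≤ G.dist y (u 0) + G.dist (u 0) (u i) := by
    exact_mod_cast hc.dist_triangle
  linarith [hB i]

lemma le_penalizedDist (hc : G.Connected)
    (hB : ∀ i, (G.dist (u 0) (u i) : ℝ) ≤ c * |(i : ℝ)| + B) (y : V) (i : ℤ) :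
    (G.dist y (u i) : ℝ) - c * |(i : ℝ)| ≤ penalizedDist G u c y :=
  le_ciSup (bddAbove_penalizedDist hc hB y) i

lemma isAdmissible_penalizedDist (hc : G.Connected)
    (hB : ∀ i, (G.dist (u 0) (u i) : ℝ) ≤ c * |(i : ℝ)| + B) :
    IsAdmissible G (penalizedDist G u c) := by
  have hcenter : ∀ y, (G.dist y (u 0) : ℝ) ≤ penalizedDist G u c y := fun y => by
    simpa using le_penalizedDist hc hB y 0
  intro x y
  have : (G.dist x y : ℝ) ≤ G.dist x (u 0) + G.dist y (u 0) := by
    rw [SimpleGraph.dist_comm (u := y)]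
    exact_mod_cast hc.dist_triangle
  linarith [hcenter x, hcenter y]

lemma abs_penalizedDist_sub_le (hc : G.Connected)
    (hB : ∀ i, (G.dist (u 0) (u i) : ℝ) ≤ c * |(i : ℝ)| + B) (hc₀ : 0 ≤ c)
    {g : Equiv.Perm V} (hg : IsGraphAut G g) (hshift : ∀ i, u (i + 1) = g (u i)) (y : V) :
    |penalizedDist G u c (g y) - penalizedDist G u c y| ≤ c := by
  have hdist : ∀ i, G.dist (g y) (u (i + 1)) = G.dist y (u i) := fun i => by
    rw [hshift, hg.dist_eq hc]
  rw [abs_sub_le_iff]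
  constructor
  · refine sub_le_iff_le_add'.mpr (ciSup_le fun i => ?_)
    have h₁ := le_penalizedDist hc hB y (i - 1)
    have h₂ : |((i - 1 : ℤ) : ℝ)| ≤ |(i : ℝ)| + 1 := by
      simpa using abs_sub (i : ℝ) 1
    simp only [← hdist (i - 1), sub_add_cancel] at h₁
    linarith [mul_le_mul_of_nonneg_left h₂ hc₀]
  · refine sub_le_iff_le_add'.mpr (ciSup_le fun i => ?_)
    have h₁ := le_penalizedDist hc hB (g y) (i + 1)
    have h₂ : |((i + 1 : ℤ) : ℝ)| ≤ |(i : ℝ)| + 1 := by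
      simpa using abs_add_le (i : ℝ) 1
    simp only [hdist] at h₁
    linarith [mul_le_mul_of_nonneg_left h₂ hc₀]

end PenalizedDist

section RoundCliques

variable {V : Type*} {G : SimpleGraph V} {g : Equiv.Perm V} {N : ℕ}

lemma mem_phi_iff {p : V → ℝ} (hp : ∀ x, 0 ≤ p x) {z : V} :
    z ∈ phi G p ↔ ∀ x, G.dist x z ≤ ⌈p x⌉.toNat :=
  forall_congr' fun x => by rw [Int.le_toNat (Int.ceil_nonneg (hp x))]; exact_mod_cast Iff.rfl

lemma isBallInter_phi {p : V → ℝ} (hp : ∀ x, 0 ≤ p x) : IsBallInter G (phi G p) :=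
  ⟨range fun x => (x, ⌈p x⌉.toNat), Set.ext fun z => by
    rw [mem_phi_iff hp, mem_iInter_ball, forall_mem_range]⟩

lemma isClique_phi (hc : G.Connected) {p : V → ℝ} (hp : p ∈ InjHull G) :
    G.IsClique (phi G p) := by
  -- On `phi G p` every `d(w, y) - p y` is below `⌈p y⌉ - p y < 1`, and `p w` is their supremum.
  have hle : ∀ w ∈ phi G p, ⌈p w⌉ ≤ 1 := fun w hw => by
    refine Int.ceil_le.mpr ((isLUB_le_iff (hp.2 w)).mpr ?_)
    rintro _ ⟨y, rfl⟩
    dsimp only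
    rw [SimpleGraph.dist_comm]
    push_cast
    linarith [hw y, Int.ceil_lt_add_one (p y)]
  intro w hw w' hw' hne
  have : (G.dist w w' : ℝ) ≤ 1 := (hw' w).trans (by exact_mod_cast hle w hw)
  exact SimpleGraph.dist_eq_one_iff_adj.mp
    (le_antisymm (by exact_mod_cast this) (hc.pos_dist_of_ne hne))

lemma hullAct_one (f : V → ℝ) : hullAct 1 f = f := rfl

lemma hullAct_mul (a b : Equiv.Perm V) (f : V → ℝ) :
    hullAct (a * b) f = hullAct a (hullAct b f) := by
  ext x
  simp [hullAct]

lemma phi_hullAct (hg : IsGraphAut G g) (hc : G.Connected) (p : V → ℝ) :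
    phi G (hullAct g p) = g • phi G p := by
  ext z
  rw [mem_smul_set_iff_inv_smul_mem, Equiv.Perm.smul_def]
  refine Equiv.forall_congr g⁻¹ fun x => ?_
  rw [hg.inv.dist_eq hc]
  rfl

lemma natCast_le_ceil_add_ceil {n : ℕ} {a b δ : ℝ} (h : (n : ℝ) ≤ a + b + δ)
    (hδ : δ < 1) : (n : ℤ) ≤ ⌈a⌉ + ⌈b⌉ := by
  have : (n : ℝ) < ⌈a⌉ + ⌈b⌉ + 1 := by linarith [Int.le_ceil a, Int.le_ceil b]
  have : (n : ℤ) < ⌈a⌉ + ⌈b⌉ + 1 := by exact_mod_cast this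
  omega

lemma IsHellyGraph.biInter_phi_nonempty (hH : IsHellyGraph G) {ι : Type*} {s : Set ι}
    {p : ι → V → ℝ} (hp : ∀ i x, 0 ≤ p i x)
    (hpair : ∀ i ∈ s, ∀ j ∈ s, ∀ x y, (G.dist x y : ℤ) ≤ ⌈p i x⌉ + ⌈p j y⌉) :
    (⋂ i ∈ s, phi G (p i)).Nonempty := by
  obtain ⟨z, hz⟩ :=
    hH.iInter_ball_nonempty (S := {q | ∃ i ∈ s, ∃ x, q = (x, ⌈p i x⌉.toNat)})
    (by
      rintro _ ⟨i, hi, x, rfl⟩ _ ⟨j, hj, y, rfl⟩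
      have := hpair i hi j hj x y
      dsimp only
      omega)
  exact ⟨z, mem_iInter₂.mpr fun i hi =>
    (mem_phi_iff (hp i)).mpr fun x => mem_iInter_ball.mp hz _ ⟨i, hi, x, rfl⟩⟩

lemma abs_pow_apply_sub_le {p : V → ℝ} {c : ℝ} (h : ∀ y, |p (g y) - p y| ≤ c) (n : ℕ)
    (x : V) : |p ((g ^ n) x) - p x| ≤ n * c := by
  induction n with
  | zero => simp
  | succ n ih =>
    rw [pow_succ', Equiv.Perm.mul_apply]
    calc |p (g ((g ^ n) x)) - p x|
        ≤ |p (g ((g ^ n) x)) - p ((g ^ n) x)| + |p ((g ^ n) x) - p x| := abs_sub_le _ _ _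
      _ ≤ c + n * c := add_le_add (h _) ih
      _ = (n + 1 : ℕ) * c := by push_cast; ring

lemma DimAtMost.exists_roundClique_subset_smul (hdim : DimAtMost G N) {s : ℕ → Set V}
    (hs : ∀ i, IsBallInter G (s i)) (hclique : G.IsClique (s 0))
    (hshift : ∀ i, s (i + 1) = g • s i) (hne : (⋂ i ∈ Iic (N + 1), s i).Nonempty) :
    ∃ A, IsRoundClique G A ∧ A ⊆ g • A := by
  set T : ℕ → Set V := fun j => ⋂ i ∈ Iic j, s i
  have hanti : Antitone T := fun a b hab => biInter_subset_biInter_left (Iic_subset_Iic.mpr hab)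
  have hround : ∀ j ≤ N + 1, IsRoundClique G (T j) := fun j hj =>
    ⟨hne.mono (hanti hj), hclique.subset (biInter_subset_of_mem (by simp)),
      IsBallInter.iInter fun i => IsBallInter.iInter fun _ => hs i⟩
  obtain ⟨i, hi, heq⟩ := hdim.exists_succ_eq (c := fun i => T (N + 1 - i))
    (fun a b hab => hanti (by omega)) (fun i _ => hround _ (by omega))
  have hJ : T (N - i + 1) = T (N - i) := by
    rw [show N - i + 1 = N + 1 - i by omega, show N - i = N + 1 - (i + 1) by omega]
    exact heq.symm
  refine ⟨T (N - i), hround _ (by omega), fun w hw => ?_⟩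
  rw [← hJ] at hw
  rw [mem_smul_set_iff_inv_smul_mem]
  refine mem_iInter₂.mpr fun j hj => ?_
  have := mem_iInter₂.mp hw (j + 1) (by simpa using hj)
  rwa [hshift, mem_smul_set_iff_inv_smul_mem] at this

lemma DimAtMost.smul_eq_of_subset_smul (hdim : DimAtMost G N) (hg : IsGraphAut G g)
    (hc : G.Connected) {A : Set V} (hA : IsRoundClique G A) (hsub : A ⊆ g • A) :
    g • A = A := by
  have hmono : Monotone fun i : ℕ => (g ^ i) • A := monotone_nat_of_le_succ fun i => by
    rw [pow_succ, mul_smul]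
    exact smul_set_mono hsub
  obtain ⟨i, -, heq⟩ := hdim.exists_succ_eq hmono fun i _ => hA.smul (hg.pow i) hc
  rw [pow_succ, mul_smul] at heq
  exact (smul_left_cancel_iff _).mp heq

end RoundCliques

section Classification

variable {V : Type*} {G : SimpleGraph V} {g : Equiv.Perm V} {N : ℕ}

lemma IsGraphAut.exists_mem_injHull_abs_sub_le (hg : IsGraphAut G g) (hc : G.Connected)
    (x₀ : V) {k : ℕ} (hk : k ≠ 0) {c : ℝ}
    (hkc : (G.dist x₀ ((g ^ k) x₀) : ℝ) ≤ c * k) :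
    ∃ p ∈ InjHull G, ∀ y, |p (g y) - p y| ≤ c := by
  have : Nonempty V := ⟨x₀⟩
  have hc₀ : 0 ≤ c :=
    (mul_nonneg_iff_of_pos_right (by positivity)).mp ((Nat.cast_nonneg _).trans hkc)
  obtain ⟨B, hB⟩ := hg.exists_dist_zpow_apply_le hc x₀ hk hkc
  set u : ℤ → V := fun i => (g ^ i) x₀
  have hu : ∀ i : ℤ, (G.dist (u 0) (u i) : ℝ) ≤ c * |(i : ℝ)| + B := by
    simpa [u] using hB
  have hshift : ∀ i : ℤ, u (i + 1) = g (u i) := fun i => by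
    simp only [u, add_comm i, zpow_one_add, Equiv.Perm.mul_apply]
  have hf := isAdmissible_penalizedDist hc hu
  exact ⟨_, langLimit_mem_injHull hf, hf.abs_langLimit_comp_sub_le (hg.dist_eq hc)
    (abs_penalizedDist_sub_le hc hu hc₀ hg hshift)⟩

lemma exists_roundClique_smul_eq_of_mem_injHull (hH : IsHellyGraph G) (hdim : DimAtMost G N)
    (hg : IsGraphAut G g) {p : V → ℝ} (hp : p ∈ InjHull G) {c : ℝ}
    (hNc : 2 * (N + 1) * c < 1) (hdrift : ∀ y, |p (g y) - p y| ≤ c) :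
    ∃ σ, IsRoundClique G σ ∧ g • σ = σ := by
  have hc := hH.1
  have hp₀ : ∀ x, 0 ≤ p x := IsAdmissible.nonneg hp.1
  set q : ℕ → V → ℝ := fun i => hullAct (g ^ i) p
  have hq : ∀ i x, |q i x - p x| ≤ i * c := fun i x => by
    simpa [q, hullAct, inv_pow] using abs_pow_apply_sub_le (g := g⁻¹)
      (fun y => by simpa [abs_sub_comm] using hdrift (g⁻¹ y)) i x
  have hpair : ∀ i ∈ Iic (N + 1), ∀ j ∈ Iic (N + 1), ∀ x y,
      (G.dist x y : ℤ) ≤ ⌈q i x⌉ + ⌈q j y⌉ := by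
    intro i hi j hj x y
    have hc₀ : 0 ≤ c := (abs_nonneg _).trans (hdrift x)
    have hij : ((i + j : ℕ) : ℝ) ≤ 2 * (N + 1) := by
      exact_mod_cast (show i + j ≤ 2 * (N + 1) by simp only [mem_Iic] at hi hj; omega)
    refine natCast_le_ceil_add_ceil (δ := (i + j : ℕ) * c) ?_
      ((mul_le_mul_of_nonneg_right hij hc₀).trans_lt hNc)
    push_cast
    linarith [hp.1 x y, abs_le.mp (hq i x), abs_le.mp (hq j y)]
  have hshift : ∀ i, phi G (q (i + 1)) = g • phi G (q i) := fun i => by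
    rw [← phi_hullAct hg hc, ← hullAct_mul, ← pow_succ']
  have hclique : G.IsClique (phi G (q 0)) := by
    simpa only [q, pow_zero, hullAct_one] using isClique_phi hc hp
  obtain ⟨A, hA, hsub⟩ := hdim.exists_roundClique_subset_smul (s := fun i => phi G (q i))
    (fun i => isBallInter_phi fun x => hp₀ _) hclique hshift
    (hH.biInter_phi_nonempty (fun i x => hp₀ _) hpair)
  exact ⟨A, hA, hdim.smul_eq_of_subset_smul hg hc hA hsub⟩

lemma IsGraphAut.exists_roundClique_smul_eq_of_dist_lt (hg : IsGraphAut G g) (hH : IsHellyGraph G)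
    (hdim : DimAtMost G N) {x₀ : V} {k : ℕ}
    (hk : 2 * (N + 2) * (G.dist x₀ ((g ^ k) x₀) : ℝ) < k) :
    ∃ σ, IsRoundClique G σ ∧ g • σ = σ := by
  have hk₀ : k ≠ 0 := by
    rintro rfl
    simp at hk
  obtain ⟨p, hp, hdrift⟩ := hg.exists_mem_injHull_abs_sub_le hH.1 x₀ hk₀
    (c := (2 * (N + 2))⁻¹) (by rw [inv_mul_eq_div, le_div_iff₀ (by positivity)]; linarith)
  refine exists_roundClique_smul_eq_of_mem_injHull hH hdim hg hp ?_ hdrift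
  rw [← div_eq_mul_inv, div_lt_one (by positivity)]
  linarith

lemma IsGraphAut.dist_zpow_apply_le_of_smul_eq (hg : IsGraphAut G g) (hc : G.Connected)
    {σ : Set V} (hσ : G.IsClique σ) (hgσ : g • σ = σ) {z : V} (hz : z ∈ σ)
    (x : V) (n : ℤ) : G.dist x ((g ^ n) x) ≤ 2 * G.dist x z + 1 := by
  have hstab : (g ^ n) • σ = σ :=
    MulAction.mem_stabilizer_iff.mp (Subgroup.zpow_mem _ (MulAction.mem_stabilizer_iff.mpr hgσ) n)
  have hzn : (g ^ n) z ∈ σ := hstab ▸ smul_mem_smul_set hz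
  have h₁ := hc.dist_triangle (u := x) (v := z) (w := (g ^ n) x)
  have h₂ := hc.dist_triangle (u := z) (v := (g ^ n) z) (w := (g ^ n) x)
  rw [(hg.zpow n).dist_eq hc, SimpleGraph.dist_comm (u := z) (v := x)] at h₂
  have := hσ.dist_le_one hz hzn
  omega

lemma IsGraphAut.exists_quasiIsometry_of_le_mul_dist (hg : IsGraphAut G g) (hc : G.Connected)
    (x : V) {L : ℝ} (hL : 1 ≤ L) (hlow : ∀ k : ℕ, (k : ℝ) ≤ L * G.dist x ((g ^ k) x)) :
    ∃ lam C : ℝ, 1 ≤ lam ∧ 0 ≤ C ∧ ∀ m n : ℤ,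
      lam⁻¹ * |(m : ℝ) - (n : ℝ)| - C ≤ (G.dist ((g ^ m) x) ((g ^ n) x) : ℝ) ∧
      (G.dist ((g ^ m) x) ((g ^ n) x) : ℝ) ≤ lam * |(m : ℝ) - (n : ℝ)| + C := by
  refine ⟨max L (G.dist x (g x)), 0, le_max_of_le_left hL, le_rfl, fun m n => ?_⟩
  rw [hg.dist_zpow_apply_zpow_apply hc, hg.dist_zpow_apply_eq_natAbs hc, abs_sub_comm,
    ← Int.cast_sub, ← Int.cast_abs, ← Nat.cast_natAbs, sub_zero, add_zero]
  set K := (n - m).natAbs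
  constructor
  · calc (max L (G.dist x (g x)))⁻¹ * K ≤ L⁻¹ * K := by gcongr; exact le_max_left _ _
      _ ≤ G.dist x ((g ^ K) x) := by rw [inv_mul_le_iff₀ (by positivity)]; exact hlow K
  · calc (G.dist x ((g ^ K) x) : ℝ) ≤ K * G.dist x (g x) := by
          exact_mod_cast hg.dist_pow_apply_le hc x K
      _ ≤ max L (G.dist x (g x)) * K := by rw [mul_comm]; gcongr; exact le_max_right _ _

end Classification

/-- Classification of automorphisms of a Helly graph of finite combinatorial
dimension: every automorphism is elliptic (all orbits bounded) or hyperbolic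
(every orbit map is a quasi-isometric embedding). -/
theorem stmt0 {V : Type*} (G : SimpleGraph V) (N : ℕ)
    (hHelly : IsHellyGraph G) (hdim : DimAtMost G N)
    (g : Equiv.Perm V) (hg : IsGraphAut G g) :
    (∀ x : V, ∃ R : ℝ, ∀ n : ℤ, (G.dist x ((g ^ n) x) : ℝ) ≤ R) ∨
    (∀ x : V, ∃ lam C : ℝ, 1 ≤ lam ∧ 0 ≤ C ∧ ∀ m n : ℤ,
      lam⁻¹ * |(m : ℝ) - (n : ℝ)| - C ≤ (G.dist ((g ^ m) x) ((g ^ n) x) : ℝ) ∧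
      (G.dist ((g ^ m) x) ((g ^ n) x) : ℝ) ≤ lam * |(m : ℝ) - (n : ℝ)| + C) := by
  by_cases hfix : ∃ σ, IsRoundClique G σ ∧ g • σ = σ
  · obtain ⟨σ, ⟨⟨z, hz⟩, hσ, -⟩, hgσ⟩ := hfix
    exact Or.inl fun x => ⟨2 * G.dist x z + 1, fun n => by
      exact_mod_cast hg.dist_zpow_apply_le_of_smul_eq hHelly.1 hσ hgσ hz x n⟩
  · refine Or.inr fun x => hg.exists_quasiIsometry_of_le_mul_dist hHelly.1 x
      (L := 2 * (N + 2)) (by linarith) fun k => ?_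
    by_contra! hk
    exact hfix (hg.exists_roundClique_smul_eq_of_dist_lt hHelly hdim hk)

end HellyPaper
end

section
/- Let X be a Helly graph, and let σ, τ be two distinct round cliques of X, with corresponding points f_σ, f_τ ∈ E(X) under the bijection p ↦ ⋂_{x∈X} B(x, ⌈p(x)⌉) between {p ∈ E(X) : ∀ x, p(x) ∈ (1/2)ℕ} and the round cliques of X. Then d∞(f_σ, f_τ) = 1/2 if and only if σ ∩ τ ≠ ∅ and σ ∪ τ is a clique of X. (Thus the graph on half-integer points of E(X) with edges at d∞-distance 1/2 is isomorphic to the graph on round cliques with edges {σ,τ} whenever σ ∩ τ ≠ ∅ and σ ∪ τ is a clique; this common graph is the first Helly subdivision X' of X.) -/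
/-!
Write `f_σ = a / 2` and `f_τ = b / 2` with `a b : V → ℕ`, so that every estimate becomes an
inequality in `ℕ`. Then `φ(a / 2)` is the set of common centers of the balls
`B(x, ⌈a x / 2⌉)`, and `d∞(f_σ, f_τ) = 1/2` says that `|a - b| ≤ 1` pointwise (`σ ≠ τ` rules out
distance `0`).

If `|a - b| ≤ 1`, the radii `min ⌈a / 2⌉ ⌈b / 2⌉` still satisfy `d(u, v) ≤ r u + r v`, so the
Helly property gives a point of `σ ∩ τ`, and the inequalities `d(u, v) ≤ f u + f v` bound distances
in `σ ∪ τ` by `1`. Conversely, let `z ∈ σ ∩ τ` with `σ ∪ τ` a clique. For each `x`, Helly gives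
`p ∈ σ` with `2 d(x, p) ≤ a x`; since `p` is within distance `1` of all of `τ`, `b p ≤ 2`. Then
`b x ≤ b p + 2 d(x, p)` and `b x ≤ b z + 2 d(x, z) ≤ 1 + a x + a z` give `b x ≤ a x + 1` by
parity.
-/

namespace HellyPaper

open SimpleGraph

section

variable {V : Type*} {G : SimpleGraph V}

noncomputable def halve (h : V → ℕ) : V → ℝ := fun x => (h x : ℝ) / 2

lemma halfInt.exists_eq_halve {f : V → ℝ} (hf : halfInt f) : ∃ h : V → ℕ, f = halve h := by
  choose h hh using hf
  exact ⟨h, funext hh⟩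

lemma ceil_natCast_div_two (k : ℕ) : ⌈(k : ℝ) / 2⌉ = ((k + 1) / 2 : ℕ) := by
  rw [Int.ceil_eq_iff]
  rcases Nat.even_or_odd' k with ⟨m, rfl | rfl⟩
  · rw [show (2 * m + 1) / 2 = m by omega]
    push_cast
    constructor <;> linarith
  · rw [show (2 * m + 1 + 1) / 2 = m + 1 by omega]
    push_cast
    constructor <;> linarith

lemma mem_phi_halve_iff {h : V → ℕ} {z : V} :
    z ∈ phi G (halve h) ↔ ∀ x, G.dist x z ≤ (h x + 1) / 2 := by
  simp only [phi, halve, Set.mem_ofPred_eq, ceil_natCast_div_two, Int.cast_natCast, Nat.cast_le]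

section Hull

variable {h : V → ℕ}

lemma two_mul_dist_le (hf : halve h ∈ InjHull G) (x y : V) : 2 * G.dist x y ≤ h x + h y := by
  have := hf.1 x y
  simp only [halve] at this
  exact_mod_cast (by linarith : (2 * G.dist x y : ℝ) ≤ h x + h y)

lemma le_of_forall_two_mul_dist_le (hf : halve h ∈ InjHull G) (x : V) {c : ℕ}
    (hc : ∀ y, 2 * G.dist x y ≤ c + h y) : h x ≤ c := by
  have : halve h x ≤ c / 2 := (hf.2 x).2 <| by
    rintro _ ⟨y, rfl⟩
    have : (2 * G.dist x y : ℝ) ≤ c + h y := by exact_mod_cast hc y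
    simp only [halve]
    linarith
  simp only [halve] at this
  exact_mod_cast (by linarith : (h x : ℝ) ≤ c)

lemma le_add_two_mul_dist (hconn : G.Connected) (hf : halve h ∈ InjHull G) (x y : V) :
    h x ≤ h y + 2 * G.dist x y :=
  le_of_forall_two_mul_dist_le hf x fun z => by
    have := hconn.dist_triangle (u := x) (v := y) (w := z)
    have := two_mul_dist_le hf y z
    omega

lemma le_one_of_mem_phi (hf : halve h ∈ InjHull G) {z : V} (hz : z ∈ phi G (halve h)) :
    h z ≤ 1 :=
  le_of_forall_two_mul_dist_le hf z fun y => by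
    have := mem_phi_halve_iff.1 hz y
    rw [dist_comm]
    omega

end Hull

lemma ball_inter_ball_nonempty (hconn : G.Connected) {x y : V} {r s : ℕ}
    (h : G.dist x y ≤ r + s) : (ball G x r ∩ ball G y s).Nonempty := by
  obtain ⟨w, hw⟩ := hconn.exists_walk_length_eq_dist x y
  refine ⟨w.getVert r, (dist_le (w.take r)).trans ?_, ?_⟩
  · simp
  · rw [ball, Set.mem_ofPred_eq, dist_comm]
    refine (dist_le (w.drop r)).trans ?_
    simp only [Walk.drop_length]
    omega

lemma IsHellyGraph.exists_center (hH : IsHellyGraph G) (r : V → ℕ)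
    (hr : ∀ u v, G.dist u v ≤ r u + r v) : ∃ z, ∀ u, G.dist u z ≤ r u := by
  obtain ⟨z, hz⟩ := hH.2 (Set.range fun u => (u, r u)) <| by
    rintro _ ⟨u, rfl⟩ _ ⟨v, rfl⟩
    exact ball_inter_ball_nonempty hH.1 (hr u v)
  exact ⟨z, fun u => Set.mem_iInter₂.1 hz (u, r u) ⟨u, rfl⟩⟩

lemma _root_.SimpleGraph.IsClique.dist_le_one_s8 {s : Set V} (hs : G.IsClique s) {u v : V}
    (hu : u ∈ s) (hv : v ∈ s) : G.dist u v ≤ 1 := by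
  rcases eq_or_ne u v with rfl | huv
  · simp
  · exact (dist_eq_one_iff_adj.2 (hs hu hv huv)).le

section Helly

variable {a b : V → ℕ}

lemma exists_mem_phi_two_mul_dist_le (hH : IsHellyGraph G) (ha : halve a ∈ InjHull G) (x : V) :
    ∃ p ∈ phi G (halve a), 2 * G.dist x p ≤ a x := by
  -- `⌊a x / 2⌋ + d(x, ·)` is the radius function of the single ball `B(x, ⌊a x / 2⌋)`.
  obtain ⟨p, hp⟩ := hH.exists_center (fun u => min ((a u + 1) / 2) (a x / 2 + G.dist x u))
    fun u v => by
      have := hH.1.dist_triangle (u := u) (v := x) (w := v)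
      have := dist_comm (G := G) (u := u) (v := x)
      have := two_mul_dist_le ha u v
      have := two_mul_dist_le ha u x
      have := two_mul_dist_le ha x v
      omega
  refine ⟨p, mem_phi_halve_iff.2 fun u => (hp u).trans (min_le_left _ _), ?_⟩
  have := hp x
  simp only [dist_self] at this
  omega

lemma le_two_of_forall_dist_le_one (hH : IsHellyGraph G) (ha : halve a ∈ InjHull G) {p : V}
    (hp : ∀ w ∈ phi G (halve a), G.dist p w ≤ 1) : a p ≤ 2 :=
  le_of_forall_two_mul_dist_le ha p fun v => by
    obtain ⟨w, hw, hvw⟩ := exists_mem_phi_two_mul_dist_le hH ha v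
    have := hH.1.dist_triangle (u := p) (v := w) (w := v)
    have := hp w hw
    rw [dist_comm (u := v)] at hvw
    omega

lemma phi_inter_phi_nonempty (hH : IsHellyGraph G) (ha : halve a ∈ InjHull G)
    (hb : halve b ∈ InjHull G) (hab : ∀ x, a x ≤ b x + 1 ∧ b x ≤ a x + 1) :
    (phi G (halve a) ∩ phi G (halve b)).Nonempty := by
  obtain ⟨z, hz⟩ := hH.exists_center (fun u => min ((a u + 1) / 2) ((b u + 1) / 2))
    fun u v => by
      have := two_mul_dist_le ha u v
      have := two_mul_dist_le hb u v
      have := hab u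
      have := hab v
      omega
  exact ⟨z, mem_phi_halve_iff.2 fun u => (hz u).trans (min_le_left _ _),
    mem_phi_halve_iff.2 fun u => (hz u).trans (min_le_right _ _)⟩

lemma dist_le_one_of_mem_phi (ha : halve a ∈ InjHull G) (hb : halve b ∈ InjHull G)
    (hab : ∀ x, a x ≤ b x + 1) {u v : V}
    (hu : u ∈ phi G (halve a)) (hv : v ∈ phi G (halve b)) : G.dist u v ≤ 1 := by
  have := two_mul_dist_le ha u v
  have := le_one_of_mem_phi ha hu
  have := le_one_of_mem_phi hb hv
  have := hab v
  omega

lemma isClique_phi_union (hconn : G.Connected) (ha : halve a ∈ InjHull G)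
    (hb : halve b ∈ InjHull G) (hab : ∀ x, a x ≤ b x + 1 ∧ b x ≤ a x + 1) :
    G.IsClique (phi G (halve a) ∪ phi G (halve b)) := by
  intro u hu v hv huv
  by_contra hadj
  have hlt := hconn.one_lt_dist_of_ne_of_not_adj huv hadj
  have : G.dist u v ≤ 1 := by
    rcases hu with hu | hu <;> rcases hv with hv | hv
    · exact dist_le_one_of_mem_phi ha ha (fun x => Nat.le_succ _) hu hv
    · exact dist_le_one_of_mem_phi ha hb (fun x => (hab x).1) hu hv
    · exact dist_le_one_of_mem_phi hb ha (fun x => (hab x).2) hu hv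
    · exact dist_le_one_of_mem_phi hb hb (fun x => Nat.le_succ _) hu hv
  omega

lemma le_add_one_of_isClique_phi_union (hH : IsHellyGraph G) (ha : halve a ∈ InjHull G)
    (hb : halve b ∈ InjHull G) {z : V} (hz : z ∈ phi G (halve a) ∩ phi G (halve b))
    (hc : G.IsClique (phi G (halve a) ∪ phi G (halve b))) (x : V) : b x ≤ a x + 1 := by
  obtain ⟨p, hp, hxp⟩ := exists_mem_phi_two_mul_dist_le hH ha x
  have hbp : b p ≤ 2 := le_two_of_forall_dist_le_one hH hb fun w hw =>
    hc.dist_le_one_s8 (Or.inl hp) (Or.inr hw)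
  have := le_add_two_mul_dist hH.1 hb x p
  have := le_add_two_mul_dist hH.1 hb x z
  have := two_mul_dist_le ha x z
  have := le_one_of_mem_phi ha hz.1
  have := le_one_of_mem_phi hb hz.2
  omega

end Helly

lemma abs_half_sub_half_le_half_iff (m n : ℕ) :
    |(m : ℝ) / 2 - n / 2| ≤ 1 / 2 ↔ m ≤ n + 1 ∧ n ≤ m + 1 := by
  rw [abs_le, ← Nat.cast_le (α := ℝ), ← Nat.cast_le (α := ℝ)]
  push_cast
  constructor <;> rintro ⟨h1, h2⟩ <;> constructor <;> linarith

lemma half_le_abs_half_sub_half {m n : ℕ} (hmn : m ≠ n) : 1 / 2 ≤ |(m : ℝ) / 2 - n / 2| := by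
  rw [le_abs]
  rcases hmn.lt_or_gt with h | h
  · have : (m : ℝ) + 1 ≤ n := by exact_mod_cast h
    right; linarith
  · have : (n : ℝ) + 1 ≤ m := by exact_mod_cast h
    left; linarith

lemma supDist_halve_eq_half_iff {a b : V → ℕ} (hne : ∃ x, a x ≠ b x) :
    supDist (halve a) (halve b) = 1 / 2 ↔ ∀ x, a x ≤ b x + 1 ∧ b x ≤ a x + 1 := by
  obtain ⟨x₀, hx₀⟩ := hne
  have : Nonempty V := ⟨x₀⟩
  simp only [supDist, halve]
  constructor
  · intro h x
    have hbdd : BddAbove (Set.range fun x => |(a x : ℝ) / 2 - b x / 2|) := by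
      by_contra hb
      rw [Real.iSup_of_not_bddAbove hb] at h
      norm_num at h
    exact (abs_half_sub_half_le_half_iff _ _).1 (h ▸ le_ciSup hbdd x)
  · intro h
    have hle := fun x => (abs_half_sub_half_le_half_iff _ _).2 (h x)
    exact le_antisymm (ciSup_le hle)
      (le_ciSup_of_le ⟨1 / 2, Set.forall_mem_range.2 hle⟩ x₀ (half_le_abs_half_sub_half hx₀))

end

theorem stmt8_general {V : Type*} (G : SimpleGraph V) (hHelly : IsHellyGraph G)
    (σ τ : Set V)
    (hστ : σ ≠ τ)
    (fσ fτ : V → ℝ) (hfσ : fσ ∈ InjHull G) (hfτ : fτ ∈ InjHull G)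
    (hσhalf : halfInt fσ) (hτhalf : halfInt fτ)
    (hφσ : phi G fσ = σ) (hφτ : phi G fτ = τ) :
    supDist fσ fτ = 1 / 2 ↔ ((σ ∩ τ).Nonempty ∧ G.IsClique (σ ∪ τ)) := by
  obtain ⟨a, rfl⟩ := hσhalf.exists_eq_halve
  obtain ⟨b, rfl⟩ := hτhalf.exists_eq_halve
  subst hφσ hφτ
  have hne : ∃ x, a x ≠ b x := by
    by_contra! h
    exact hστ (by rw [funext h])
  rw [supDist_halve_eq_half_iff hne]
  refine ⟨fun hab => ⟨phi_inter_phi_nonempty hHelly hfσ hfτ hab,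
    isClique_phi_union hHelly.1 hfσ hfτ hab⟩, ?_⟩
  rintro ⟨⟨z, hz⟩, hc⟩ x
  exact ⟨le_add_one_of_isClique_phi_union hHelly hfτ hfσ ⟨hz.2, hz.1⟩
      (Set.union_comm _ _ ▸ hc) x,
    le_add_one_of_isClique_phi_union hHelly hfσ hfτ hz hc x⟩

/-- Two distinct round cliques σ, τ of a Helly graph, with corresponding
half-integer points f_σ, f_τ of the injective hull, satisfy
d∞(f_σ, f_τ) = 1/2 if and only if σ ∩ τ ≠ ∅ and σ ∪ τ is a clique. -/
theorem stmt8 {V : Type*} (G : SimpleGraph V) (hHelly : IsHellyGraph G)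
    (σ τ : Set V) (hσr : IsRoundClique G σ) (hτr : IsRoundClique G τ)
    (hστ : σ ≠ τ)
    (fσ fτ : V → ℝ) (hfσ : fσ ∈ InjHull G) (hfτ : fτ ∈ InjHull G)
    (hσhalf : halfInt fσ) (hτhalf : halfInt fτ)
    (hφσ : phi G fσ = σ) (hφτ : phi G fτ = τ) :
    supDist fσ fτ = 1 / 2 ↔ ((σ ∩ τ).Nonempty ∧ G.IsClique (σ ∪ τ)) :=
  stmt8_general G hHelly σ τ hστ fσ fτ hfσ hfτ hσhalf hτhalf hφσ hφτ

end HellyPaper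
end

section
/- Let N ≥ 1 and equip ℤ^N with the ℓ∞ metric d∞(x,y) = max_{1≤i≤N} |x_i − y_i|. Let g : ℤ^N → ℤ^N be the bijection g(x₁, x₂, …, x_N) = (x₂ + 1, x₃, …, x_N, x₁). Then g^N is the translation by (1, 1, …, 1), and for every x ∈ ℤ^N the limit lim_{n→∞} d∞(x, g^n · x)/n exists and equals 1/N (g is hyperbolic with translation length 1/N). -/
/-!
Since `g ^ N` adds `1` to every coordinate, writing `n = N q + r` with `r < N` gives
`g ^ n x = g ^ r x + (q, …, q)`. Hence `d∞(x, g ^ n x)` differs from `q = ⌊n / N⌋` by at most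
`max_{r < N} d∞(x, g ^ r x)`, a bound independent of `n`; dividing by `n` gives the limit `1 / N`.
The identity for `g ^ N` is read off from an explicit formula for the iterates of `g`.
-/
namespace HellyPaper

open Filter Topology

theorem tendsto_div_natCast_of_abs_sub_mul_le {u : ℕ → ℝ} {a C : ℝ}
    (h : ∀ n, |u n - a * n| ≤ C) : Tendsto (fun n => u n / n) atTop (𝓝 a) := by
  have herr : Tendsto (fun n : ℕ => (u n - a * n) / n) atTop (𝓝 0) := by
    refine squeeze_zero_norm' (Eventually.of_forall fun n => ?_)
      (tendsto_const_div_atTop_nhds_zero_nat C)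
    rw [Real.norm_eq_abs, abs_div, Nat.abs_cast]
    gcongr
    exact h n
  refine (by simpa using herr.const_add a : Tendsto _ atTop (𝓝 a)).congr' ?_
  filter_upwards [eventually_ne_atTop 0] with n hn
  field_simp
  ring

theorem natCast_sup_natAbs_sub_eq_dist {ι : Type*} [Fintype ι] (x y : ι → ℤ) :
    ((Finset.univ.sup fun i => (x i - y i).natAbs : ℕ) : ℝ) = dist x y := by
  rw [dist_pi_def, ← NNReal.coe_natCast,
    Finset.apply_sup_eq_sup_comp_of_linearOrder _ Nat.mono_cast Nat.cast_zero]
  congr 2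
  ext i
  simp [Int.dist_eq, Nat.cast_natAbs]

section TranslationPower

variable {ι : Type*} {g : Equiv.Perm (ι → ℤ)} {N : ℕ}

theorem pow_mul_add_apply_of_pow_eq_add_one (h : ∀ x, (g ^ N) x = x + 1) (q r : ℕ)
    (x : ι → ℤ) : (g ^ (N * q + r)) x = (g ^ r) x + q := by
  induction q with
  | zero => simp
  | succ q ih =>
    rw [show N * (q + 1) + r = N + (N * q + r) by ring, pow_add, Equiv.Perm.mul_apply, ih, h]
    push_cast
    ring

theorem abs_dist_pow_sub_div_le [Fintype ι] [Nonempty ι] (h : ∀ x, (g ^ N) x = x + 1)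
    (x : ι → ℤ) (n : ℕ) : |dist x ((g ^ n) x) - (n / N : ℕ)| ≤ dist x ((g ^ (n % N)) x) := by
  set y := (g ^ (n % N)) x
  have hy : (g ^ n) x = y + (n / N : ℕ) := by
    rw [← pow_mul_add_apply_of_pow_eq_add_one h, Nat.div_add_mod]
  have hshift : dist y (y + (n / N : ℕ)) = (n / N : ℕ) := by
    rw [dist_comm, dist_eq_norm, add_sub_cancel_left, Pi.natCast_def, pi_norm_const,
      Int.norm_natCast]
  rw [hy, ← hshift]
  exact abs_dist_sub_le x y _

theorem tendsto_dist_pow_div_of_pow_eq_add_one [Fintype ι] [Nonempty ι] (hN : 0 < N)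
    (h : ∀ x, (g ^ N) x = x + 1) (x : ι → ℤ) :
    Tendsto (fun n : ℕ => dist x ((g ^ n) x) / n) atTop (𝓝 (1 / N)) := by
  refine tendsto_div_natCast_of_abs_sub_mul_le
    (C := ∑ r ∈ Finset.range N, dist x ((g ^ r) x) + 1) fun n => ?_
  have hfloor : |((n / N : ℕ) : ℝ) - 1 / N * n| ≤ 1 := by
    have hfl := Nat.floor_div_eq_div (K := ℝ) n N
    rw [one_div_mul_eq_div, ← hfl, abs_sub_comm, abs_le]
    constructor
    · linarith [Nat.floor_le (R := ℝ) (by positivity : (0 : ℝ) ≤ n / N)]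
    · linarith [Nat.lt_floor_add_one (R := ℝ) (n / N)]
  have hrem : dist x ((g ^ (n % N)) x) ≤ ∑ r ∈ Finset.range N, dist x ((g ^ r) x) :=
    Finset.single_le_sum (f := fun r => dist x ((g ^ r) x)) (fun _ _ => dist_nonneg)
      (Finset.mem_range.2 (Nat.mod_lt n hN))
  calc |dist x ((g ^ n) x) - 1 / N * n|
      ≤ |dist x ((g ^ n) x) - (n / N : ℕ)| + |((n / N : ℕ) : ℝ) - 1 / N * n| :=
        abs_sub_le _ _ _
    _ ≤ _ := add_le_add ((abs_dist_pow_sub_div_le h x n).trans hrem) hfloor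

end TranslationPower

theorem add_predMod_add_one_modEq {N : ℕ} (hN : 0 < N) (i n : ℕ) :
    n + (i + N - 1) % N + 1 ≡ i + n [MOD N] :=
  calc n + (i + N - 1) % N + 1 ≡ n + (i + N - 1) + 1 [MOD N] :=
        ((Nat.mod_modEq _ _).add_left n).add_right 1
    _ = i + n + N := by omega
    _ ≡ i + n [MOD N] := Nat.add_modEq_right

section Rotation

variable {N : ℕ} (hN : 0 < N) {g : Equiv.Perm (Fin N → ℤ)}

/-- `(n + (i - 1) mod N) / N` counts the steps `k < n` with `N ∣ i + k`, i.e. those at which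
the coordinate now in position `i` passed through position `0` and picked up a `+1`. -/
theorem rotation_pow_apply
    (hg : ∀ (x : Fin N → ℤ) (i : Fin N),
      g x i = x ⟨((i : ℕ) + 1) % N, Nat.mod_lt _ hN⟩ + (if (i : ℕ) = 0 then 1 else 0))
    (n : ℕ) (x : Fin N → ℤ) (i : Fin N) :
    (g ^ n) x i = x ⟨((i : ℕ) + n) % N, Nat.mod_lt _ hN⟩ +
      (((n + ((i : ℕ) + N - 1) % N) / N : ℕ) : ℤ) := by
  induction n generalizing x with
  | zero =>
    rw [Nat.div_eq_of_lt (by simpa using Nat.mod_lt _ hN)]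
    simp [Nat.mod_eq_of_lt i.isLt]
  | succ n ih =>
    have hidx : (((i : ℕ) + n) % N + 1) % N = ((i : ℕ) + (n + 1)) % N := by
      rw [Nat.mod_add_mod, add_assoc]
    have hwrap : ((i : ℕ) + n) % N = 0 ↔ N ∣ n + ((i : ℕ) + N - 1) % N + 1 := by
      rw [(add_predMod_add_one_modEq hN i n).dvd_iff dvd_rfl, Nat.dvd_iff_mod_eq_zero]
    rw [pow_succ, Equiv.Perm.mul_apply, ih, hg, Nat.add_right_comm n 1, Nat.succ_div]
    simp only [hidx, hwrap]
    push_cast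
    ring

theorem rotation_pow_self
    (hg : ∀ (x : Fin N → ℤ) (i : Fin N),
      g x i = x ⟨((i : ℕ) + 1) % N, Nat.mod_lt _ hN⟩ + (if (i : ℕ) = 0 then 1 else 0))
    (x : Fin N → ℤ) : (g ^ N) x = x + 1 := by
  ext i
  rw [rotation_pow_apply hN hg, Nat.add_div_left _ hN, Nat.div_eq_of_lt (Nat.mod_lt _ hN)]
  simp [Nat.mod_eq_of_lt i.isLt]

end Rotation

/-- On ℤ^N with the ℓ∞ metric, the bijection
g(x₁,…,x_N) = (x₂+1, x₃, …, x_N, x₁) satisfies: g^N is the translation by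
(1,…,1), and g is hyperbolic with translation length 1/N. -/
theorem stmt17 (N : ℕ) (hN : 0 < N) (g : Equiv.Perm (Fin N → ℤ))
    (hg : ∀ (x : Fin N → ℤ) (i : Fin N),
      g x i = x ⟨((i : ℕ) + 1) % N, Nat.mod_lt _ hN⟩ +
        (if (i : ℕ) = 0 then 1 else 0)) :
    (∀ (x : Fin N → ℤ) (i : Fin N), (g ^ N) x i = x i + 1) ∧
    ∀ x : Fin N → ℤ, Filter.Tendsto
      (fun n : ℕ =>
        ((Finset.univ.sup fun i : Fin N => (x i - (g ^ n) x i).natAbs : ℕ) : ℝ) / n)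
      Filter.atTop (nhds (1 / (N : ℝ))) := by
  have hpow : ∀ x, (g ^ N) x = x + 1 := rotation_pow_self hN hg
  have : Nonempty (Fin N) := ⟨⟨0, hN⟩⟩
  refine ⟨fun x i => by rw [hpow, Pi.add_apply, Pi.one_apply], fun x => ?_⟩
  simpa only [natCast_sup_natAbs_sub_eq_dist] using
    tendsto_dist_pow_div_of_pow_eq_add_one hN hpow x

end HellyPaper
end

section
/- Let X be a Helly graph, and let X' be its first Helly subdivision: the graph whose vertices are the round cliques of X, with an edge between two distinct round cliques σ, τ if and only if σ ∩ τ ≠ ∅ and σ ∪ τ is a clique of X. Then X' is connected, and the natural map x ↦ {x} from X to X' is a 2-homothetic embedding: for all vertices x, y of X, the graph distance in X' between the singletons {x} and {y} equals 2·d(x,y). -/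
namespace HellyPaper
/-- The first Helly subdivision: vertices are round cliques, with an edge
between distinct round cliques σ, τ iff σ ∩ τ ≠ ∅ and σ ∪ τ is a clique. -/
def subdiv {V : Type*} (G : SimpleGraph V) :
    SimpleGraph {σ : Set V // IsRoundClique G σ} where
  Adj σ τ := σ ≠ τ ∧ ((σ : Set V) ∩ (τ : Set V)).Nonempty ∧
    G.IsClique ((σ : Set V) ∪ (τ : Set V))
  symm := by
    constructor
    rintro σ τ ⟨h1, h2, h3⟩
    exact ⟨h1.symm, by rwa [Set.inter_comm], by rwa [Set.union_comm]⟩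
  loopless := by
    constructor
    rintro σ ⟨h1, -, -⟩
    exact h1 rfl


/-!
Every edge `xy` of `X` lies in a round clique, namely `⋂_z B(z, max(d(z,x), d(z,y)))`,
so `{x}`, that clique and `{y}` form a path of length 2 in `X'`; hence `d'({x},{y}) ≤ 2 d(x,y)`.
Conversely, fix `x`; the quantity `min_σ d(x,·) + max_σ d(x,·)` equals `2 d(x,y)` at `σ = {y}`,
and it changes by at most 1 along an edge of `X'`, because on the clique `σ ∪ τ` the function
`d(x,·)` takes two consecutive values and `σ`, `τ` share a vertex.
-/

section

open SimpleGraph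

variable {V : Type*} {G : SimpleGraph V}

lemma isRoundClique_singleton (hc : G.Connected) (x : V) : IsRoundClique G {x} := by
  refine ⟨Set.singleton_nonempty x, G.isClique_singleton x, {(x, 0)}, ?_⟩
  ext y
  simp [ball, hc.dist_eq_zero_iff, eq_comm]

def single (hc : G.Connected) (x : V) : {σ : Set V // IsRoundClique G σ} :=
  ⟨{x}, isRoundClique_singleton hc x⟩

lemma exists_isRoundClique_of_adj (hc : G.Connected) {x y : V} (h : G.Adj x y) :
    ∃ σ : Set V, IsRoundClique G σ ∧ x ∈ σ ∧ y ∈ σ := by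
  set r : V → ℕ := fun z => max (G.dist z x) (G.dist z y)
  set σ : Set V := ⋂ z, ball G z (r z)
  have mem_σ : ∀ u, u ∈ σ ↔ ∀ z, G.dist z u ≤ r z := by simp [σ, ball]
  have hx : x ∈ σ := (mem_σ x).2 fun z => le_max_left _ _
  have hy : y ∈ σ := (mem_σ y).2 fun z => le_max_right _ _
  have hxy : G.dist x y = 1 := dist_eq_one_iff_adj.2 h
  have near : ∀ u ∈ σ, G.dist u x ≤ 1 ∧ G.dist u y ≤ 1 := by
    intro u hu
    have hux := (mem_σ u).1 hu x
    have huy := (mem_σ u).1 hu y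
    simp only [r, dist_self, hxy, dist_comm (u := y) (v := x)] at hux huy
    rw [dist_comm] at hux huy
    omega
  refine ⟨σ, ⟨⟨x, hx⟩, ?_, Set.range fun z => (z, r z), by rw [Set.biInter_range]⟩, hx, hy⟩
  intro u hu v hv huv
  have hle : G.dist u v ≤ 1 := ((mem_σ v).1 hv u).trans (max_le (near u hu).1 (near u hu).2)
  have hne : G.dist u v ≠ 0 := hc.dist_eq_zero_iff.not.2 huv
  exact dist_eq_one_iff_adj.1 (by omega)

lemma subdiv_adj_single (hc : G.Connected) {x : V} {σ : {s : Set V // IsRoundClique G s}}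
    (hx : x ∈ σ.1) (hne : σ.1 ≠ {x}) : (subdiv G).Adj (single hc x) σ := by
  refine ⟨fun h => hne (congrArg Subtype.val h).symm, ⟨x, rfl, hx⟩, ?_⟩
  rw [single, Set.union_eq_self_of_subset_left (Set.singleton_subset_iff.2 hx)]
  exact σ.2.2.1

lemma subdiv_reachable_single (hc : G.Connected) {x : V} {σ : {s : Set V // IsRoundClique G s}}
    (hx : x ∈ σ.1) : (subdiv G).Reachable (single hc x) σ := by
  by_cases hσ : σ.1 = {x}
  · rw [show σ = single hc x from Subtype.ext hσ]
  · exact (subdiv_adj_single hc hx hσ).reachable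

lemma exists_subdiv_walk_single (hc : G.Connected) {x y : V} (p : G.Walk x y) :
    ∃ q : (subdiv G).Walk (single hc x) (single hc y), q.length = 2 * p.length := by
  induction p with
  | nil => exact ⟨Walk.nil, rfl⟩
  | @cons x y z h p ih =>
    obtain ⟨q, hq⟩ := ih
    obtain ⟨σ, hσ, hxσ, hyσ⟩ := exists_isRoundClique_of_adj hc h
    have hσx : σ ≠ {x} := fun e => h.ne (Set.mem_singleton_iff.1 (e ▸ hyσ)).symm
    have hσy : σ ≠ {y} := fun e => h.ne (Set.mem_singleton_iff.1 (e ▸ hxσ))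
    have hx : (subdiv G).Adj (single hc x) ⟨σ, hσ⟩ := subdiv_adj_single hc hxσ hσx
    have hy : (subdiv G).Adj ⟨σ, hσ⟩ (single hc y) := (subdiv_adj_single hc hyσ hσy).symm
    exact ⟨.cons hx (.cons hy q), by simp [hq]; ring⟩

lemma subdiv_connected (hc : G.Connected) : (subdiv G).Connected := by
  obtain ⟨x₀⟩ := hc.nonempty
  have : Nonempty {s : Set V // IsRoundClique G s} := ⟨single hc x₀⟩
  refine ⟨fun σ τ => ?_⟩
  obtain ⟨x, hx⟩ := σ.2.1
  obtain ⟨y, hy⟩ := τ.2.1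
  obtain ⟨q, -⟩ := exists_subdiv_walk_single hc (hc x y).some
  exact (subdiv_reachable_single hc hx).symm.trans
    (q.reachable.trans (subdiv_reachable_single hc hy))

/-- `min_σ d(x,·) + max_σ d(x,·)`, provided `σ` is bounded (otherwise `sSup` is the junk `0`). -/
noncomputable def minAddMaxDist (G : SimpleGraph V) (x : V) (σ : Set V) : ℕ :=
  sInf (G.dist x '' σ) + sSup (G.dist x '' σ)

lemma minAddMaxDist_singleton (x y : V) : minAddMaxDist G x {y} = 2 * G.dist x y := by
  simp [minAddMaxDist, two_mul]

lemma dist_le_dist_add_one_of_isClique (hc : G.Connected) (x : V) {s : Set V} (hs : G.IsClique s)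
    {u v : V} (hu : u ∈ s) (hv : v ∈ s) : G.dist x u ≤ G.dist x v + 1 := by
  rcases eq_or_ne v u with rfl | hne
  · omega
  · have := hc.dist_triangle (u := x) (v := v) (w := u)
    rw [dist_eq_one_iff_adj.2 (hs hv hu hne)] at this
    exact this

lemma minAddMaxDist_le_add_one (hc : G.Connected) (x : V) {σ τ : Set V}
    (hcl : G.IsClique (σ ∪ τ)) (hint : (σ ∩ τ).Nonempty) :
    minAddMaxDist G x σ ≤ minAddMaxDist G x τ + 1 := by
  obtain ⟨w, hwσ, hwτ⟩ := hint
  have step {u v : V} (hu : u ∈ σ ∪ τ) (hv : v ∈ σ ∪ τ) : G.dist x u ≤ G.dist x v + 1 :=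
    dist_le_dist_add_one_of_isClique hc x hcl hu hv
  obtain ⟨v, hvτ, hv⟩ : sInf (G.dist x '' τ) ∈ G.dist x '' τ := Nat.sInf_mem ⟨_, w, hwτ, rfl⟩
  have max_σ : sSup (G.dist x '' σ) ≤ sInf (G.dist x '' τ) + 1 :=
    csSup_le ⟨_, w, hwσ, rfl⟩ <| by
      rintro _ ⟨u, hu, rfl⟩
      exact hv ▸ step (.inl hu) (.inr hvτ)
  have min_σ : sInf (G.dist x '' σ) ≤ G.dist x w := Nat.sInf_le ⟨w, hwσ, rfl⟩
  have max_τ : G.dist x w ≤ sSup (G.dist x '' τ) := by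
    refine le_csSup ⟨G.dist x w + 1, ?_⟩ ⟨w, hwτ, rfl⟩
    rintro _ ⟨u, hu, rfl⟩
    exact step (.inr hu) (.inl hwσ)
  unfold minAddMaxDist
  omega

lemma minAddMaxDist_le_add_length (hc : G.Connected) (x : V)
    {σ τ : {s : Set V // IsRoundClique G s}} (q : (subdiv G).Walk σ τ) :
    minAddMaxDist G x σ ≤ minAddMaxDist G x τ + q.length := by
  induction q with
  | nil => simp
  | cons h _ ih =>
    have := minAddMaxDist_le_add_one hc x h.2.2 h.2.1
    rw [Walk.length_cons]
    omega

lemma two_mul_dist_le_subdiv_dist (hc : G.Connected) (x y : V) :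
    2 * G.dist x y ≤ (subdiv G).dist (single hc x) (single hc y) := by
  obtain ⟨q, hq⟩ := (subdiv_connected hc).exists_walk_length_eq_dist (single hc y) (single hc x)
  have : minAddMaxDist G x {y} ≤ minAddMaxDist G x {x} + q.length :=
    minAddMaxDist_le_add_length hc x q
  rw [minAddMaxDist_singleton, minAddMaxDist_singleton, dist_self] at this
  calc 2 * G.dist x y ≤ q.length := by omega
    _ = (subdiv G).dist (single hc x) (single hc y) := by rw [hq, SimpleGraph.dist_comm]

end

/-- The first Helly subdivision of a Helly graph is connected, singletons are
round cliques, and the natural map x ↦ {x} is a 2-homothetic embedding: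
the distance in X' between {x} and {y} is 2·d(x,y). -/
theorem stmt18 {V : Type*} (G : SimpleGraph V) (hHelly : IsHellyGraph G) :
    (∀ x : V, IsRoundClique G {x}) ∧
    (subdiv G).Connected ∧
    ∀ (x y : V) (sx sy : {σ : Set V // IsRoundClique G σ}),
      (sx : Set V) = {x} → (sy : Set V) = {y} →
      (subdiv G).dist sx sy = 2 * G.dist x y := by
  have hc := hHelly.1
  refine ⟨isRoundClique_singleton hc, subdiv_connected hc, ?_⟩
  intro x y sx sy hx hy
  obtain rfl : sx = single hc x := Subtype.ext hx
  obtain rfl : sy = single hc y := Subtype.ext hy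
  refine le_antisymm ?_ (two_mul_dist_le_subdiv_dist hc x y)
  obtain ⟨p, hp⟩ := hc.exists_walk_length_eq_dist x y
  obtain ⟨q, hq⟩ := exists_subdiv_walk_single hc p
  exact hp ▸ hq ▸ SimpleGraph.dist_le q

end HellyPaper
end

section
/- Let X be a Helly graph and let g be an elliptic graph automorphism of X (some orbit of ⟨g⟩ in X is bounded). Then g fixes a vertex of the first Helly subdivision: there exists p ∈ E(X) with g·p = p and p(x) ∈ (1/2)·ℕ for every vertex x ∈ X. -/
/-!
Encode half-integer valued functions as `k / 2` with `k : V → ℕ`, and consider those `k / 2`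
that are `g`-invariant and satisfy `d(x, y) ≤ k x / 2 + k y / 2`. A bounded orbit `⟨g⟩ x₀`
provides one, namely twice `x ↦ sup_n d(x, gⁿ x₀)`; chains of such functions have pointwise
infima that are attained, so by Zorn's lemma there is a minimal one. A minimal one is extremal:
if `x` had slack `2 d(x, y) < k x + k y` for every `y`, then `k` could be lowered by one on the
`g`-invariant set of points with slack and value `k x`, since pairwise sums of `k` there are
even and hence exceed `2 d` by at least two.
-/

namespace SimpleGraph

variable {V W : Type*} {G : SimpleGraph V} {G' : SimpleGraph W}

lemma Reachable.dist_map_le {u v : V} (h : G.Reachable u v) (f : G →g G') :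
    G'.dist (f u) (f v) ≤ G.dist u v := by
  obtain ⟨w, hw⟩ := h.exists_walk_length_eq_dist
  simpa [hw] using dist_le (w.map f)

lemma Iso.dist_eq (e : G ≃g G') (u v : V) : G'.dist (e u) (e v) = G.dist u v := by
  by_cases h : G.Reachable u v
  · refine le_antisymm (h.dist_map_le e.toHom) ?_
    simpa using (h.map e.toHom).dist_map_le e.symm.toHom
  · have h' : ¬G'.Reachable (e u) (e v) := fun h' => h (by simpa using h'.map e.symm.toHom)
    rw [dist_eq_zero_of_not_reachable h, dist_eq_zero_of_not_reachable h']

end SimpleGraph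

theorem zorn_ge_nonempty₀ {α : Type*} [Preorder α] (s : Set α)
    (ih : ∀ c ⊆ s, IsChain (· ≤ ·) c → ∀ y ∈ c, ∃ lb ∈ s, ∀ z ∈ c, lb ≤ z) (x : α)
    (hxs : x ∈ s) : ∃ m, m ≤ x ∧ Minimal (· ∈ s) m :=
  zorn_le_nonempty₀ (α := αᵒᵈ) s (fun c hcs hc y hy => ih c hcs hc.symm y hy) x hxs

lemma IsChain.exists_eq_ciInf_pair {ι α : Type*} [ConditionallyCompleteLinearOrderBot α]
    [WellFoundedLT α] {c : Set (ι → α)} (hc : IsChain (· ≤ ·) c) [Nonempty c] (x y : ι) :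
    ∃ f ∈ c, f x = ⨅ h : c, h.1 x ∧ f y = ⨅ h : c, h.1 y := by
  obtain ⟨⟨f₁, hf₁⟩, e₁⟩ := ciInf_mem fun h : c => h.1 x
  obtain ⟨⟨f₂, hf₂⟩, e₂⟩ := ciInf_mem fun h : c => h.1 y
  rcases hc.total hf₁ hf₂ with h | h
  · exact ⟨f₁, hf₁, e₁, le_antisymm (e₂ ▸ h y) (ciInf_le' (fun h : c => h.1 y) ⟨f₁, hf₁⟩)⟩
  · exact ⟨f₂, hf₂, le_antisymm (e₁ ▸ h x) (ciInf_le' (fun h : c => h.1 x) ⟨f₂, hf₂⟩), e₂⟩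

namespace HellyPaper

section

variable {V : Type*} {G : SimpleGraph V} {g : Equiv.Perm V}

lemma IsGraphAut.dist_apply (hg : IsGraphAut G g) (x y : V) :
    G.dist (g x) (g y) = G.dist x y :=
  SimpleGraph.Iso.dist_eq ⟨g, hg _ _⟩ x y

/-- `k` stands for the half-integer valued function `x ↦ k x / 2`. -/
structure IsInvariantHalfAdmissible (G : SimpleGraph V) (g : Equiv.Perm V) (k : V → ℕ) :
    Prop where
  two_mul_dist_le : ∀ x y, 2 * G.dist x y ≤ k x + k y
  apply_perm : ∀ x, k (g x) = k x

lemma exists_isInvariantHalfAdmissible (hconn : G.Connected) (hg : IsGraphAut G g) {x₀ : V}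
    (horb : BddAbove (Set.range fun n : ℤ => G.dist x₀ ((g ^ n) x₀))) :
    ∃ k, IsInvariantHalfAdmissible G g k := by
  obtain ⟨r, hr⟩ := horb
  have hbdd : ∀ x, BddAbove (Set.range fun n : ℤ => G.dist x ((g ^ n) x₀)) := fun x =>
    ⟨G.dist x x₀ + r, Set.forall_mem_range.2 fun n =>
      hconn.dist_triangle.trans (Nat.add_le_add_left (hr ⟨n, rfl⟩) _)⟩
  have hle : ∀ x, G.dist x x₀ ≤ ⨆ n : ℤ, G.dist x ((g ^ n) x₀) := fun x => by
    simpa using le_ciSup (hbdd x) 0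
  refine ⟨fun x => 2 * ⨆ n : ℤ, G.dist x ((g ^ n) x₀), fun x y => ?_, fun x => ?_⟩
  · have := hle x
    have := hle y
    have := hconn.dist_triangle (u := x) (v := x₀) (w := y)
    rw [SimpleGraph.dist_comm (u := x₀)] at this
    omega
  · rw [← (Equiv.addLeft (1 : ℤ)).surjective.iSup_comp]
    simp only [Equiv.coe_addLeft, zpow_one_add, Equiv.Perm.mul_apply, hg.dist_apply]

lemma IsInvariantHalfAdmissible.ciInf {c : Set (V → ℕ)} (hc : IsChain (· ≤ ·) c) [Nonempty c]
    (hS : ∀ k ∈ c, IsInvariantHalfAdmissible G g k) :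
    IsInvariantHalfAdmissible G g fun x => ⨅ k : c, k.1 x := by
  refine ⟨fun x y => ?_, fun x => ?_⟩
  · obtain ⟨k, hk, ex, ey⟩ := hc.exists_eq_ciInf_pair x y
    simpa [← ex, ← ey] using (hS k hk).two_mul_dist_le x y
  · exact iInf_congr fun k => (hS k.1 k.2).apply_perm x

lemma exists_minimal_isInvariantHalfAdmissible (h : ∃ k, IsInvariantHalfAdmissible G g k) :
    ∃ k, Minimal (IsInvariantHalfAdmissible G g) k := by
  obtain ⟨k₀, hk₀⟩ := h
  obtain ⟨k, -, hk⟩ := zorn_ge_nonempty₀ {k | IsInvariantHalfAdmissible G g k}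
    (fun c hcS hc y hy => by
      have : Nonempty c := ⟨⟨y, hy⟩⟩
      exact ⟨_, IsInvariantHalfAdmissible.ciInf hc hcS,
        fun k hk x => ciInf_le' (fun k : c => k.1 x) ⟨k, hk⟩⟩) k₀ hk₀
  exact ⟨k, hk⟩

lemma exists_two_mul_dist_eq_of_minimal (hg : IsGraphAut G g) {k : V → ℕ}
    (hk : Minimal (IsInvariantHalfAdmissible G g) k) (x : V) :
    ∃ y, 2 * G.dist x y = k x + k y := by
  classical
  by_contra! hslack
  set T : Set V := {z | k z = k x ∧ ∀ y, 2 * G.dist z y < k z + k y}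
  have hxT : x ∈ T := ⟨rfl, fun y => lt_of_le_of_ne (hk.1.two_mul_dist_le x y) (hslack y)⟩
  have hT : ∀ z, g z ∈ T ↔ z ∈ T := fun z => by
    simp only [T, Set.mem_ofPred_eq, hk.1.apply_perm, ← g.forall_congr_right (q := fun y =>
      2 * G.dist (g z) y < k z + k y), hg.dist_apply]
  let k' : V → ℕ := fun z => if z ∈ T then k z - 1 else k z
  have hk' : IsInvariantHalfAdmissible G g k' := by
    refine ⟨fun a b => ?_, fun z => by simp only [k', hT, hk.1.apply_perm]⟩
    have := hk.1.two_mul_dist_le a b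
    by_cases ha : a ∈ T <;> by_cases hb : b ∈ T <;> simp only [k', ha, hb, if_true, if_false]
    · have := ha.2 b
      have := ha.1.trans hb.1.symm
      omega
    · have := ha.2 b
      omega
    · have := hb.2 a
      rw [SimpleGraph.dist_comm] at this
      omega
    · omega
  have hle := hk.2 hk' (fun z => by dsimp only [k']; split_ifs <;> omega) x
  have hpos := hxT.2 x
  simp only [k', hxT, if_true, SimpleGraph.dist_self] at hle hpos
  omega

lemma div_two_mem_injHull {k : V → ℕ} (hle : ∀ x y, 2 * G.dist x y ≤ k x + k y)
    (heq : ∀ x, ∃ y, 2 * G.dist x y = k x + k y) : (fun x => (k x : ℝ) / 2) ∈ InjHull G := by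
  have hle' : ∀ x y, (G.dist x y : ℝ) ≤ k x / 2 + k y / 2 := fun x y => by
    have : ((2 * G.dist x y : ℕ) : ℝ) ≤ (k x + k y : ℕ) := Nat.cast_le.2 (hle x y)
    push_cast at this
    linarith
  refine ⟨hle', fun x => IsGreatest.isLUB ⟨?_, ?_⟩⟩
  · obtain ⟨y, hy⟩ := heq x
    have : ((2 * G.dist x y : ℕ) : ℝ) = (k x + k y : ℕ) := congrArg _ hy
    push_cast at this
    exact ⟨y, by linarith⟩
  · rintro _ ⟨y, rfl⟩
    linarith [hle' x y]

end

/-- An elliptic automorphism of a Helly graph fixes a vertex of the first Helly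
subdivision: a half-integer valued point of the injective hull. -/
theorem stmt19 {V : Type*} (G : SimpleGraph V) (hHelly : IsHellyGraph G)
    (g : Equiv.Perm V) (hg : IsGraphAut G g)
    (hell : ∃ (x : V) (R : ℝ), ∀ n : ℤ, (G.dist x ((g ^ n) x) : ℝ) ≤ R) :
    ∃ p ∈ InjHull G, hullAct g p = p ∧ halfInt p := by
  obtain ⟨x₀, R, hR⟩ := hell
  obtain ⟨k, hk⟩ := exists_minimal_isInvariantHalfAdmissible <|
    exists_isInvariantHalfAdmissible hHelly.1 hg (x₀ := x₀)
      ⟨⌊R⌋₊, Set.forall_mem_range.2 fun n => Nat.le_floor (hR n)⟩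
  refine ⟨fun x => (k x : ℝ) / 2,
    div_two_mem_injHull hk.1.two_mul_dist_le (exists_two_mul_dist_eq_of_minimal hg hk),
    funext fun x => ?_, fun x => ⟨k x, rfl⟩⟩
  rw [hullAct, ← hk.1.apply_perm (g⁻¹ x), Equiv.Perm.inv_def, g.apply_symm_apply]

end HellyPaper
end
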